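/- There exists n₀ such that for every n ≥ n₀, every ε ∈ (0,1), and every uniform fractional matching x in a graph G=(V,E) on n vertices, there exists an (ε, ε⁴/(24·log₂² n))-split of x: vectors z⁽¹⁾, …, z⁽ᵏ⁾ ∈ ℝ_{≥0}^E, each an (ε, ε⁴/(24·log₂² n))-coarsening of x, with pairwise disjoint supports contained in supp(x), such that Σ_i |supp(z⁽ⁱ⁾)| ≥ |supp(x)|/2. -/

import Mathlib

/-!
If `λ ≥ δ`, then `x` is a coarsening of itself. Otherwise pick `r` with `μ := 2^r λ ∈ [δ, 2δ)`.
Colouring the edges of a longest trail alternately, and recursing on the remaining edges, halves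
an edge set `S` so that every vertex degree and `|S|` are halved up to an additive error of `2`
and `1`: the two ends of a longest trail have no edges outside it, and every other vertex sees
the two colours equally often on the trail. Halving `r` times splits `supp(x)` into classes `P`
with `|deg_S v - 2^r deg_P v| ≤ 2(2^r - 1)`. The `μ`-uniform vector on each class then differs
from `x` by less than `2μ < 4δ ≤ ε` at every vertex and in total mass, so it is a coarsening,
and the classes cover all of `supp(x)`.
-/

open Finset

variable {V : Type*} [Fintype V] [DecidableEq V]

/-- The fractional degree `x(v) := Σ_{e ∋ v} x_e` of a vertex `v` under `x`. -/
noncomputable def fracDeg (x : Sym2 V → ℝ) (v : V) : ℝ :=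
  ∑ e : Sym2 V, if v ∈ e then x e else 0

/-- `‖x‖ := Σ_e x_e`. -/
noncomputable def vnorm (x : Sym2 V → ℝ) : ℝ :=
  ∑ e : Sym2 V, x e

/-- `d^ε_V(x,y) := Σ_{v∈V} max(|x(v) − y(v)| − ε, 0)`. -/
noncomputable def dV (ε : ℝ) (x y : Sym2 V → ℝ) : ℝ :=
  ∑ v : V, max (|fracDeg x v - fracDeg y v| - ε) 0

/-- `x'` is an `(ε,δ)`-coarsening of `x`: `x' ∈ ℝ_{≥0}^E` with
(C0) `supp(x') ⊆ supp(x)`; (C1) `|‖x‖ − ‖x'‖| ≤ ε‖x‖ + ε`; (C2) `d^ε_V(x,x') ≤ ε‖x‖ + ε`;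
(C3) `x'_e ∈ {0} ∪ [δ, 2δ)` whenever `x_e < δ`, and `x'_e = x_e` whenever `x_e ≥ δ`. -/
def IsCoarsening (ε δ : ℝ) (x x' : Sym2 V → ℝ) : Prop :=
  (∀ e, 0 ≤ x' e) ∧
  (∀ e, x' e ≠ 0 → x e ≠ 0) ∧
  |vnorm x - vnorm x'| ≤ ε * vnorm x + ε ∧
  dV ε x x' ≤ ε * vnorm x + ε ∧
  (∀ e, x e < δ → x' e = 0 ∨ (δ ≤ x' e ∧ x' e < 2 * δ)) ∧
  (∀ e, δ ≤ x e → x' e = x e)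

/-- A coarsening is bounded if additionally (C4) `x'(v) ≤ x(v) + ε` for every vertex `v`. -/
def IsBoundedCoarsening (ε δ : ℝ) (x x' : Sym2 V → ℝ) : Prop :=
  IsCoarsening ε δ x x' ∧ ∀ v : V, fracDeg x' v ≤ fracDeg x v + ε

namespace SimpleGraph.Walk

variable {α : Type*} {G : SimpleGraph α}

def IsLongestTrail {u v : α} (p : G.Walk u v) : Prop :=
  p.IsTrail ∧ ∀ ⦃u' v' : α⦄ (q : G.Walk u' v'), q.IsTrail → q.length ≤ p.length

lemma IsLongestTrail.reverse {u v : α} {p : G.Walk u v} (hp : p.IsLongestTrail) :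
    p.reverse.IsLongestTrail :=
  ⟨hp.1.reverse, fun _ _ q hq => (length_reverse p).symm ▸ hp.2 q hq⟩

lemma IsLongestTrail.mem_edges_of_adj_start {u v w : α} {p : G.Walk u v}
    (hp : p.IsLongestTrail) (h : G.Adj u w) : s(u, w) ∈ p.edges := by
  by_contra hw
  have := hp.2 (cons h.symm p) (hp.1.cons h.symm (by rwa [Sym2.eq_swap]))
  simp at this

lemma IsLongestTrail.mem_edges_of_adj_end {u v w : α} {p : G.Walk u v}
    (hp : p.IsLongestTrail) (h : G.Adj v w) : s(v, w) ∈ p.edges := by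
  simpa using hp.reverse.mem_edges_of_adj_start h

lemma exists_isLongestTrail {N : ℕ}
    (hN : ∀ ⦃u v : α⦄ (p : G.Walk u v), p.IsTrail → p.length ≤ N)
    {u₀ v₀ : α} {p₀ : G.Walk u₀ v₀} (hp₀ : p₀.IsTrail) :
    ∃ (u v : α) (p : G.Walk u v), p.IsLongestTrail ∧ p₀.length ≤ p.length := by
  classical
  let IsTrailLength n := ∃ (u v : α) (p : G.Walk u v), p.IsTrail ∧ p.length = n
  have h₀ : IsTrailLength p₀.length := ⟨_, _, p₀, hp₀, rfl⟩
  obtain ⟨u, v, p, hp, hlen⟩ := Nat.findGreatest_spec (hN p₀ hp₀) h₀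
  refine ⟨u, v, p, ⟨hp, fun _ _ q hq => ?_⟩, hlen ▸ Nat.le_findGreatest (hN p₀ hp₀) h₀⟩
  exact hlen ▸ Nat.le_findGreatest (hN q hq) ⟨_, _, q, hq, rfl⟩

end SimpleGraph.Walk

section Halving

variable {α : Type*} [DecidableEq α]

def edgeDeg (S : Finset (Sym2 α)) (v : α) : ℕ := #{e ∈ S | v ∈ e}

lemma edgeDeg_mono {S T : Finset (Sym2 α)} (h : S ⊆ T) (v : α) : edgeDeg S v ≤ edgeDeg T v :=
  card_le_card (filter_subset_filter _ h)

lemma edgeDeg_union_of_disjoint {S T : Finset (Sym2 α)} (h : Disjoint S T) (v : α) :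
    edgeDeg (S ∪ T) v = edgeDeg S v + edgeDeg T v := by
  rw [edgeDeg, filter_union, card_union_of_disjoint (disjoint_filter_filter h), edgeDeg, edgeDeg]

lemma edgeDeg_sdiff_add_edgeDeg {S T : Finset (Sym2 α)} (h : T ⊆ S) (v : α) :
    edgeDeg (S \ T) v + edgeDeg T v = edgeDeg S v := by
  rw [← edgeDeg_union_of_disjoint sdiff_disjoint, sdiff_union_of_subset h]

lemma edgeDeg_insert {S : Finset (Sym2 α)} {e : Sym2 α} (he : e ∉ S) (v : α) :
    edgeDeg (insert e S) v = edgeDeg S v + if v ∈ e then 1 else 0 := by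
  rw [edgeDeg, filter_insert]
  split_ifs
  · rw [card_insert_of_notMem (fun h => he (mem_filter.1 h).1)]; rfl
  · rfl

lemma edgeDeg_eq_zero_iff {S : Finset (Sym2 α)} {v : α} : edgeDeg S v = 0 ↔ ∀ e ∈ S, v ∉ e := by
  simp [edgeDeg, filter_eq_empty_iff]

namespace SimpleGraph.Walk

variable {G : SimpleGraph α}

theorem IsTrail.exists_alternating_half {u v : α} {p : G.Walk u v} (hp : p.IsTrail) :
    ∃ A ⊆ p.edges.toFinset,
      (∀ x, 2 * (edgeDeg A x : ℤ) - edgeDeg p.edges.toFinset x =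
        (if x = u then 1 else 0) - (-1) ^ p.length * (if x = v then 1 else 0)) ∧
      0 ≤ 2 * (#A : ℤ) - #p.edges.toFinset ∧ 2 * (#A : ℤ) - #p.edges.toFinset ≤ 1 := by
  induction p with
  | nil => exact ⟨∅, by simp, fun x => by simp [edgeDeg], by simp, by simp⟩
  | @cons u w v h p ih =>
    rw [isTrail_cons] at hp
    obtain ⟨A, hAT, hdeg, hcard₀, hcard₁⟩ := ih hp.1
    set T := p.edges.toFinset
    have hT : (cons h p).edges.toFinset = insert s(u, w) T := by simp [T]
    have heT : s(u, w) ∉ T := by simpa [T] using hp.2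
    have heA : s(u, w) ∉ T \ A := fun he => heT (mem_sdiff.1 he).1
    -- prepending an edge swaps the two colour classes of the rest of the trail
    refine ⟨insert s(u, w) (T \ A), by rw [hT]; exact insert_subset_insert _ sdiff_subset,
      fun x => ?_, ?_⟩
    · have hinc : (if x ∈ s(u, w) then 1 else 0 : ℤ) =
          (if x = u then 1 else 0) + (if x = w then 1 else 0) := by
        by_cases hxu : x = u
        · subst hxu; simp [h.ne]
        · by_cases hxw : x = w <;> simp [hxu, hxw, h.ne']
      have hsd : (edgeDeg (T \ A) x : ℤ) + edgeDeg A x = edgeDeg T x := by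
        exact_mod_cast edgeDeg_sdiff_add_edgeDeg hAT x
      rw [hT, edgeDeg_insert heA, edgeDeg_insert heT, length_cons, pow_succ]
      push_cast
      linear_combination hinc - hdeg x + 2 * hsd
    · rw [hT, card_insert_of_notMem heA, card_insert_of_notMem heT, card_sdiff_of_subset hAT]
      have := card_le_card hAT
      push_cast [this]
      constructor <;> linarith

theorem IsTrail.exists_half_of_abs_le_one {u v : α} {p : G.Walk u v} (hp : p.IsTrail) {b : ℤ}
    (hb : |b| ≤ 1) :
    ∃ C ⊆ p.edges.toFinset,
      (∀ x, x ≠ u → x ≠ v → 2 * (edgeDeg C x : ℤ) = edgeDeg p.edges.toFinset x) ∧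
      (∀ x, |2 * (edgeDeg C x : ℤ) - edgeDeg p.edges.toFinset x| ≤ 2) ∧
      |b + (2 * (#C : ℤ) - #p.edges.toFinset)| ≤ 1 := by
  set T := p.edges.toFinset
  obtain ⟨A, hAT, hdeg, hcard₀, hcard₁⟩ := hp.exists_alternating_half
  have hsign := neg_one_pow_eq_or ℤ p.length
  have hTA x : (edgeDeg (T \ A) x : ℤ) + edgeDeg A x = edgeDeg T x := by
    exact_mod_cast edgeDeg_sdiff_add_edgeDeg hAT x
  have hTA' : (#(T \ A) : ℤ) + #A = #T := by exact_mod_cast card_sdiff_add_card_eq_card hAT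
  rw [abs_le] at hb
  -- the complementary colouring `T \ A` reverses every imbalance
  rcases le_or_gt b 0 with hb0 | hb0
  · refine ⟨A, hAT, fun x hxu hxv => ?_, fun x => ?_, ?_⟩
    · have := hdeg x
      simp only [hxu, hxv, if_false, mul_zero, sub_zero] at this
      linarith
    · rw [hdeg x, abs_le]
      rcases hsign with h | h <;> rw [h] <;> split_ifs <;> norm_num
    · rw [abs_le]; constructor <;> linarith
  · refine ⟨T \ A, sdiff_subset, fun x hxu hxv => ?_, fun x => ?_, ?_⟩
    · have := hdeg x
      simp only [hxu, hxv, if_false, mul_zero, sub_zero] at this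
      linarith [hTA x]
    · have h2 : 2 * (edgeDeg (T \ A) x : ℤ) - edgeDeg T x = -(2 * edgeDeg A x - edgeDeg T x) := by
        linarith [hTA x]
      rw [h2, abs_neg, hdeg x, abs_le]
      rcases hsign with h | h <;> rw [h] <;> split_ifs <;> norm_num
    · rw [abs_le]; constructor <;> linarith

end SimpleGraph.Walk

open SimpleGraph in
lemma exists_nonextendable_trail {S : Finset (Sym2 α)} (hS : ∀ e ∈ S, ¬ e.IsDiag)
    (hne : S.Nonempty) :
    ∃ (u v : α) (p : (fromEdgeSet (S : Set (Sym2 α))).Walk u v), p.IsTrail ∧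
      p.edges.toFinset.Nonempty ∧ p.edges.toFinset ⊆ S ∧
      ∀ x, x = u ∨ x = v → edgeDeg (S \ p.edges.toFinset) x = 0 := by
  let G := fromEdgeSet (S : Set (Sym2 α))
  have hadj {a b : α} (h : s(a, b) ∈ S) : G.Adj a b :=
    (fromEdgeSet_adj _).2 ⟨h, fun hab => hS _ h (Sym2.mk_isDiag_iff.2 hab)⟩
  have hedges {u v : α} (p : G.Walk u v) : p.edges.toFinset ⊆ S := fun e he => by
    have := p.edges_subset_edgeSet (List.mem_toFinset.1 he)
    rw [edgeSet_fromEdgeSet] at this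
    exact this.1
  have hlen {u v : α} {p : G.Walk u v} (hp : p.IsTrail) : p.length ≤ #S := by
    rw [← p.length_edges, ← List.toFinset_card_of_nodup hp.edges_nodup]
    exact card_le_card (hedges p)
  obtain ⟨e, he⟩ := hne
  induction e using Sym2.ind with
  | _ a b =>
  obtain ⟨u, v, p, hp, hp₁⟩ := Walk.exists_isLongestTrail (fun _ _ _ => hlen)
    (hadj he).isPath_toWalk.isTrail
  refine ⟨u, v, p, hp.1, ?_, hedges p, fun x hx => ?_⟩
  · rw [List.toFinset_nonempty_iff, ← List.length_pos_iff, p.length_edges]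
    simpa [Nat.one_le_iff_ne_zero, Nat.pos_iff_ne_zero] using hp₁
  refine edgeDeg_eq_zero_iff.2 fun e he hxe => (mem_sdiff.1 he).2 ?_
  obtain ⟨y, rfl⟩ := Sym2.mem_iff_exists.1 hxe
  rcases hx with rfl | rfl
  · exact List.mem_toFinset.2 (hp.mem_edges_of_adj_start (hadj (mem_sdiff.1 he).1))
  · exact List.mem_toFinset.2 (hp.mem_edges_of_adj_end (hadj (mem_sdiff.1 he).1))

theorem exists_halving (S : Finset (Sym2 α)) (hS : ∀ e ∈ S, ¬ e.IsDiag) :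
    ∃ A ⊆ S, (∀ v, |2 * (edgeDeg A v : ℤ) - edgeDeg S v| ≤ 2) ∧ |2 * (#A : ℤ) - #S| ≤ 1 := by
  induction S using Finset.strongInduction with
  | H S ih =>
  rcases S.eq_empty_or_nonempty with rfl | hne
  · exact ⟨∅, subset_rfl, fun v => by simp [edgeDeg], by simp⟩
  obtain ⟨u, v, p, hp, hT, hTS, hends⟩ := exists_nonextendable_trail hS hne
  set T := p.edges.toFinset
  obtain ⟨A, hA, hAdeg, hAcard⟩ := ih (S \ T) (sdiff_ssubset hTS hT)
    fun e he => hS e (mem_sdiff.1 he).1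
  obtain ⟨C, hCT, hCin, hCdeg, hCcard⟩ := hp.exists_half_of_abs_le_one hAcard
  have hdisj : Disjoint A C := disjoint_of_subset_left hA sdiff_disjoint |>.mono_right hCT
  refine ⟨A ∪ C, union_subset (hA.trans sdiff_subset) (hCT.trans hTS), fun x => ?_, ?_⟩
  · rw [edgeDeg_union_of_disjoint hdisj, ← edgeDeg_sdiff_add_edgeDeg hTS x]
    push_cast
    by_cases hx : x = u ∨ x = v
    · have h0 := hends x hx
      have hA0 : edgeDeg A x = 0 := Nat.eq_zero_of_le_zero (h0 ▸ edgeDeg_mono hA x)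
      simpa [h0, hA0] using hCdeg x
    · push Not at hx
      have hC := hCin x hx.1 hx.2
      have hA' := hAdeg x
      rw [abs_le] at hA' ⊢
      constructor <;> linarith
  · rw [card_union_of_disjoint hdisj, ← card_sdiff_add_card_eq_card hTS]
    push_cast
    convert hCcard using 2
    ring

lemma abs_sub_two_pow_succ_mul_le {s h q c : ℝ} (r : ℕ) (hs : |s - 2 * h| ≤ c)
    (hh : |h - 2 ^ r * q| ≤ c * (2 ^ r - 1)) : |s - 2 ^ (r + 1) * q| ≤ c * (2 ^ (r + 1) - 1) := by
  rw [abs_le] at *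
  rw [pow_succ]
  constructor <;> nlinarith

structure IsDyadicPartition {ι : Type*} [Fintype ι] (r : ℕ) (S : Finset (Sym2 α))
    (P : ι → Finset (Sym2 α)) : Prop where
  subset : ∀ i, P i ⊆ S
  pairwise_disjoint : Pairwise (Function.onFun Disjoint P)
  sum_card : ∑ i, #(P i) = #S
  abs_edgeDeg_sub_le : ∀ i v, |(edgeDeg S v : ℝ) - 2 ^ r * edgeDeg (P i) v| ≤ 2 * (2 ^ r - 1)
  abs_card_sub_le : ∀ i, |(#S : ℝ) - 2 ^ r * #(P i)| ≤ 2 ^ r - 1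

lemma IsDyadicPartition.sum_elim {ι₁ ι₂ : Type*} [Fintype ι₁] [Fintype ι₂] {r : ℕ}
    {S A : Finset (Sym2 α)} {P₁ : ι₁ → Finset (Sym2 α)} {P₂ : ι₂ → Finset (Sym2 α)} (hAS : A ⊆ S)
    (hdeg : ∀ v, |2 * (edgeDeg A v : ℤ) - edgeDeg S v| ≤ 2) (hcard : |2 * (#A : ℤ) - #S| ≤ 1)
    (h₁ : IsDyadicPartition r A P₁) (h₂ : IsDyadicPartition r (S \ A) P₂) :
    IsDyadicPartition (r + 1) S (Sum.elim P₁ P₂) := by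
  have hdegA v : |(edgeDeg S v : ℝ) - 2 * edgeDeg A v| ≤ 2 := by
    rw [abs_sub_comm]; exact_mod_cast hdeg v
  have hcardA : |(#S : ℝ) - 2 * #A| ≤ 1 := by
    rw [abs_sub_comm]; exact_mod_cast hcard
  have hdegB v : |(edgeDeg S v : ℝ) - 2 * edgeDeg (S \ A) v| ≤ 2 := by
    have : (edgeDeg (S \ A) v : ℝ) + edgeDeg A v = edgeDeg S v := by
      exact_mod_cast edgeDeg_sdiff_add_edgeDeg hAS v
    rw [← abs_neg]; convert hdegA v using 2; linarith
  have hcardB : |(#S : ℝ) - 2 * #(S \ A)| ≤ 1 := by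
    have : (#(S \ A) : ℝ) + #A = #S := by exact_mod_cast card_sdiff_add_card_eq_card hAS
    rw [← abs_neg]; convert hcardA using 2; linarith
  refine ⟨?_, ?_, ?_, ?_, ?_⟩
  · rintro (i | i)
    exacts [(h₁.subset i).trans hAS, (h₂.subset i).trans sdiff_subset]
  · rintro (i | i) (j | j) hij
    · exact h₁.pairwise_disjoint fun h => hij (congrArg Sum.inl h)
    · exact disjoint_of_subset_left (h₁.subset i) disjoint_sdiff |>.mono_right (h₂.subset j)
    · exact (disjoint_of_subset_left (h₁.subset j) disjoint_sdiff |>.mono_right (h₂.subset i)).symm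
    · exact h₂.pairwise_disjoint fun h => hij (congrArg Sum.inr h)
  · simp only [Fintype.sum_sum_type, Sum.elim_inl, Sum.elim_inr, h₁.sum_card, h₂.sum_card]
    rw [add_comm, card_sdiff_add_card_eq_card hAS]
  · rintro (i | i) v
    exacts [abs_sub_two_pow_succ_mul_le r (hdegA v) (h₁.abs_edgeDeg_sub_le i v),
      abs_sub_two_pow_succ_mul_le r (hdegB v) (h₂.abs_edgeDeg_sub_le i v)]
  · rintro (i | i)
    · have := h₁.abs_card_sub_le i
      rw [← one_mul (_ - 1)] at this ⊢
      exact abs_sub_two_pow_succ_mul_le r hcardA this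
    · have := h₂.abs_card_sub_le i
      rw [← one_mul (_ - 1)] at this ⊢
      exact abs_sub_two_pow_succ_mul_le r hcardB this

theorem exists_isDyadicPartition (r : ℕ) (S : Finset (Sym2 α)) (hS : ∀ e ∈ S, ¬ e.IsDiag) :
    ∃ (ι : Type) (_ : Fintype ι) (P : ι → Finset (Sym2 α)), IsDyadicPartition r S P := by
  induction r generalizing S with
  | zero =>
    exact ⟨Unit, inferInstance, fun _ => S, fun _ => subset_rfl,
      fun i j h => (h (Subsingleton.elim i j)).elim, by simp, by simp, by simp⟩
  | succ r ih =>
    obtain ⟨A, hAS, hdeg, hcard⟩ := exists_halving S hS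
    obtain ⟨ι₁, _, P₁, h₁⟩ := ih A fun e he => hS e (hAS he)
    obtain ⟨ι₂, _, P₂, h₂⟩ := ih (S \ A) fun e he => hS e (mem_sdiff.1 he).1
    exact ⟨ι₁ ⊕ ι₂, inferInstance, _, h₁.sum_elim hAS hdeg hcard h₂⟩

end Halving

def uniformVec {α : Type*} [DecidableEq α] (S : Finset (Sym2 α)) (c : ℝ) (e : Sym2 α) : ℝ :=
  if e ∈ S then c else 0

lemma uniformVec_ne_zero_iff {α : Type*} [DecidableEq α] {S : Finset (Sym2 α)} {c : ℝ}
    (hc : c ≠ 0) {e : Sym2 α} : uniformVec S c e ≠ 0 ↔ e ∈ S := by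
  by_cases he : e ∈ S <;> simp [uniformVec, he, hc]

lemma filter_uniformVec_ne_zero {S : Finset (Sym2 V)} {c : ℝ} (hc : c ≠ 0) :
    ({e | uniformVec S c e ≠ 0} : Finset (Sym2 V)) = S := by
  ext e; simp [uniformVec_ne_zero_iff hc]

lemma vnorm_uniformVec (S : Finset (Sym2 V)) (c : ℝ) : vnorm (uniformVec S c) = c * #S := by
  simp [vnorm, uniformVec, sum_ite_mem, mul_comm]

lemma fracDeg_uniformVec (S : Finset (Sym2 V)) (c : ℝ) (v : V) :
    fracDeg (uniformVec S c) v = c * edgeDeg S v := by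
  simp only [fracDeg, uniformVec, ← ite_and]
  rw [← sum_filter, sum_const, nsmul_eq_mul, mul_comm, edgeDeg]
  congr 3
  ext e
  simp [and_comm]

lemma eq_uniformVec_of_forall_ne_zero {x : Sym2 V → ℝ} {c : ℝ} (hx : ∀ e, x e ≠ 0 → x e = c) :
    x = uniformVec {e | x e ≠ 0} c := by
  funext e
  by_cases h : x e = 0
  · simp [uniformVec, h]
  · simp [uniformVec, hx e h]

theorem isCoarsening_uniformVec {S P : Finset (Sym2 V)} {lam μ ε δ : ℝ} (hPS : P ⊆ S)
    (hlam : 0 < lam) (hlamδ : lam < δ) (hδμ : δ ≤ μ) (hμδ : μ < 2 * δ)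
    (hdeg : ∀ v, |lam * edgeDeg S v - μ * edgeDeg P v| ≤ ε) (hcard : |lam * #S - μ * #P| ≤ ε) :
    IsCoarsening ε δ (uniformVec S lam) (uniformVec P μ) := by
  have hε : 0 ≤ ε := (abs_nonneg _).trans hcard
  have hnorm : 0 ≤ ε * (lam * #S) := by positivity
  refine ⟨fun e => ?_, fun e he => ?_, ?_, ?_, fun e _ => ?_, fun e he => ?_⟩
  · unfold uniformVec; split_ifs <;> linarith
  · rw [uniformVec_ne_zero_iff (by linarith)] at he
    exact (uniformVec_ne_zero_iff hlam.ne').2 (hPS he)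
  · rw [vnorm_uniformVec, vnorm_uniformVec]; linarith
  · have : dV ε (uniformVec S lam) (uniformVec P μ) = 0 := by
      refine sum_eq_zero fun v _ => max_eq_right ?_
      rw [fracDeg_uniformVec, fracDeg_uniformVec]
      linarith [hdeg v]
    rw [this, vnorm_uniformVec]; linarith
  · unfold uniformVec; split_ifs
    exacts [.inr ⟨hδμ, hμδ⟩, .inl rfl]
  · exfalso
    unfold uniformVec at he; split_ifs at he <;> linarith

structure IsSplit {ι : Type*} [Fintype ι] (ε δ : ℝ) (x : Sym2 V → ℝ) (z : ι → Sym2 V → ℝ) :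
    Prop where
  isCoarsening : ∀ i, IsCoarsening ε δ x (z i)
  support_subset : ∀ i e, z i e ≠ 0 → x e ≠ 0
  support_disjoint : ∀ i j, i ≠ j → ∀ e, z i e ≠ 0 → z j e = 0
  card_support_le : (#{e | x e ≠ 0} : ℝ) / 2 ≤ ∑ i, (#{e | z i e ≠ 0} : ℝ)

lemma IsSplit.comp_equiv {ι κ : Type*} [Fintype ι] [Fintype κ] {ε δ : ℝ} {x : Sym2 V → ℝ}
    {z : ι → Sym2 V → ℝ} (h : IsSplit ε δ x z) (σ : κ ≃ ι) : IsSplit ε δ x (z ∘ σ) where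
  isCoarsening i := h.isCoarsening (σ i)
  support_subset i := h.support_subset (σ i)
  support_disjoint i j hij := h.support_disjoint (σ i) (σ j) (σ.injective.ne hij)
  card_support_le := by
    simpa only [Function.comp_apply, σ.sum_comp (fun i => (#{e | z i e ≠ 0} : ℝ))] using
      h.card_support_le

lemma isSplit_self {ε δ : ℝ} {x : Sym2 V → ℝ} (hx : ∀ e, 0 ≤ x e) (hε : 0 ≤ ε)
    (hδ : ∀ e, x e < δ → x e = 0) : IsSplit ε δ x fun _ : Unit => x where
  isCoarsening _ := by
    have hnorm : 0 ≤ ε * vnorm x := mul_nonneg hε (sum_nonneg fun e _ => hx e)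
    have hdV : dV ε x x = 0 := sum_eq_zero fun v _ => by simp [hε]
    refine ⟨hx, fun _ h => h, ?_, ?_, fun e he => .inl (hδ e he), fun _ _ => rfl⟩
    · rw [sub_self, abs_zero]; linarith
    · linarith
  support_subset _ _ h := h
  support_disjoint i j hij := (hij rfl).elim
  card_support_le := by simp

theorem IsDyadicPartition.isSplit_uniformVec {ι : Type*} [Fintype ι] {r : ℕ}
    {S : Finset (Sym2 V)} {P : ι → Finset (Sym2 V)} (hP : IsDyadicPartition r S P)
    {lam δ ε : ℝ} (hlam : 0 < lam) (hlamδ : lam < δ) (hδ : δ ≤ lam * 2 ^ r)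
    (hδ' : lam * 2 ^ r < 2 * δ) (hδε : 4 * δ ≤ ε) :
    IsSplit ε δ (uniformVec S lam) fun i => uniformVec (P i) (lam * 2 ^ r) := by
  have hμ : lam * 2 ^ r ≠ 0 := by positivity
  have hscale {a b c : ℝ} (hab : |a - 2 ^ r * b| ≤ c * (2 ^ r - 1)) (hc : c ≤ 2) :
      |lam * a - lam * 2 ^ r * b| ≤ ε := by
    rw [mul_assoc, ← mul_sub, abs_mul, abs_of_pos hlam]
    have h2r : (1 : ℝ) ≤ 2 ^ r := one_le_pow₀ one_le_two
    have : c * (2 ^ r - 1) ≤ 2 * 2 ^ r := by nlinarith [(abs_nonneg _).trans hab]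
    nlinarith [mul_le_mul_of_nonneg_left hab hlam.le]
  refine ⟨fun i => ?_, fun i e he => ?_, fun i j hij e he => ?_, ?_⟩
  · exact isCoarsening_uniformVec (hP.subset i) hlam hlamδ hδ hδ'
      (fun v => hscale (hP.abs_edgeDeg_sub_le i v) le_rfl) (hscale (c := 1) (by simpa only [one_mul] using hP.abs_card_sub_le i) one_le_two)
  · rw [uniformVec_ne_zero_iff hμ] at he
    exact (uniformVec_ne_zero_iff hlam.ne').2 (hP.subset i he)
  · rw [uniformVec_ne_zero_iff hμ] at he
    simp [uniformVec, (hP.pairwise_disjoint hij).notMem_of_mem_left_finset he]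
  · simp only [filter_uniformVec_ne_zero hμ, filter_uniformVec_ne_zero hlam.ne']
    rw [← Nat.cast_sum, hP.sum_card]
    exact half_le_self (Nat.cast_nonneg _)

lemma exists_two_pow_mul_mem_Ico {lam δ : ℝ} (hlam : 0 < lam) (hlamδ : lam ≤ δ) :
    ∃ r : ℕ, δ ≤ lam * 2 ^ r ∧ lam * 2 ^ r < 2 * δ := by
  classical
  have hex : ∃ r : ℕ, δ ≤ lam * 2 ^ r := by
    obtain ⟨r, hr⟩ := pow_unbounded_of_one_lt (δ / lam) one_lt_two
    exact ⟨r, by rw [div_lt_iff₀ hlam] at hr; linarith⟩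
  refine ⟨Nat.find hex, Nat.find_spec hex, ?_⟩
  cases hr : Nat.find hex with
  | zero => simp; linarith
  | succ s =>
    have := Nat.find_min hex (by omega : s < Nat.find hex)
    rw [pow_succ]
    linarith [not_le.1 this]

lemma four_mul_pow_four_div_le {ε L : ℝ} (hε0 : 0 ≤ ε) (hε1 : ε ≤ 1) (hL : 1 ≤ L) :
    4 * (ε ^ 4 / (24 * L ^ 2)) ≤ ε := by
  have hL2 : 1 ≤ L ^ 2 := one_le_pow₀ hL
  rw [← mul_div_assoc, div_le_iff₀ (by positivity)]
  have : ε ^ 4 ≤ ε := pow_le_of_le_one hε0 hε1 (by norm_num)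
  nlinarith

/-- There exists `n₀` such that for every `n ≥ n₀`, every `ε ∈ (0,1)`, and every uniform
fractional matching `x` in a graph `G = (V,E)` on `n` vertices, there exists an
`(ε, ε⁴/(24·log₂² n))`-split of `x`: vectors `z⁽¹⁾, …, z⁽ᵏ⁾ ∈ ℝ_{≥0}^E`, each an
`(ε, ε⁴/(24·log₂² n))`-coarsening of `x`, with pairwise disjoint supports contained in
`supp(x)`, such that `Σ_i |supp(z⁽ⁱ⁾)| ≥ |supp(x)|/2`. -/
theorem stmt_13 :
    ∃ n₀ : ℕ, ∀ (V : Type) [Fintype V] [DecidableEq V] (G : SimpleGraph V),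
      n₀ ≤ Fintype.card V →
      ∀ ε : ℝ, 0 < ε → ε < 1 →
      ∀ x : Sym2 V → ℝ,
        (∀ e, 0 ≤ x e) → (∀ e, x e ≠ 0 → e ∈ G.edgeSet) →
        (∀ v, fracDeg x v ≤ 1) →
        (∃ lam : ℝ, 0 < lam ∧ ∀ e, x e ≠ 0 → x e = lam) →
        ∃ (k : ℕ) (z : Fin k → Sym2 V → ℝ),
          (∀ i, IsCoarsening ε
            (ε ^ 4 / (24 * (Real.logb 2 (Fintype.card V : ℝ)) ^ 2)) x (z i)) ∧
          (∀ i, ∀ e, z i e ≠ 0 → x e ≠ 0) ∧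
          (∀ i j, i ≠ j → ∀ e, z i e ≠ 0 → z j e = 0) ∧
          ((Finset.univ.filter (fun e : Sym2 V => x e ≠ 0)).card : ℝ) / 2 ≤
            ∑ i, ((Finset.univ.filter (fun e : Sym2 V => z i e ≠ 0)).card : ℝ) := by
  refine ⟨2, fun V _ _ G hn ε hε0 hε1 x hx0 hxG _ ⟨lam, hlam, hxl⟩ => ?_⟩
  have hL : 1 ≤ Real.logb 2 (Fintype.card V : ℝ) :=
    (Real.le_logb_iff_rpow_le one_lt_two (by positivity)).2 (by simpa using hn)
  have hδε := four_mul_pow_four_div_le hε0.le hε1.le hL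
  set δ := ε ^ 4 / (24 * (Real.logb 2 (Fintype.card V : ℝ)) ^ 2)
  suffices ∃ (ι : Type) (_ : Fintype ι) (z : ι → Sym2 V → ℝ), IsSplit ε δ x z by
    obtain ⟨ι, _, z, hz⟩ := this
    obtain ⟨h₁, h₂, h₃, h₄⟩ := hz.comp_equiv (Fintype.equivFin ι).symm
    exact ⟨_, _, h₁, h₂, h₃, h₄⟩
  rcases le_or_gt δ lam with hlamδ | hlamδ
  · refine ⟨Unit, _, _, isSplit_self hx0 hε0.le fun e he => ?_⟩
    by_contra h
    linarith [hxl e h]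
  · obtain ⟨r, hr₁, hr₂⟩ := exists_two_pow_mul_mem_Ico hlam hlamδ.le
    obtain ⟨ι, _, P, hP⟩ := exists_isDyadicPartition r {e | x e ≠ 0}
      fun e he => G.not_isDiag_of_mem_edgeSet (hxG e (mem_filter.1 he).2)
    rw [eq_uniformVec_of_forall_ne_zero hxl]
    exact ⟨ι, _, _, hP.isSplit_uniformVec hlam hlamδ hr₁ hr₂ hδε⟩
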